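/- Let $X$ be a ball quasi-Banach function space, and assume there exists $s \in (0,\infty)$ such that $X^{1/s}$ is a ball Banach function space and $M$ is bounded on $(X^{1/s})'$, so that $X \hookrightarrow L^s_w(\mathbb{R}^n)$ for the weight $w = [M(\mathbf{1}_{B(0,1)})]^\varepsilon$. Suppose $\{f_k\}$ are functions on $\mathbb{R}^{n+1}_+$ whose nontangential maximal functions satisfy $\|(f_k - f)^*\|_X \to 0$ for a function $f$ on $\mathbb{R}^{n+1}_+$, and $\epsilon_k \to 0^+$. If moreover $f$ is continuous on $\mathbb{R}^{n+1}_+$, then for every $(x,t) \in \mathbb{R}^{n+1}_+$, $\lim_{k\to\infty} f_k(x, t+\epsilon_k) = f(x,t)$. -/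

import Mathlib

/-!
Fix `(x,t)` with `t > 0`. For every `y ∈ B(x,t)` the point `(x, t + ϵ_k)` lies in the cone over
`y`, so `|f_k(x,t+ϵ_k) - f(x,t+ϵ_k)| ≤ (f_k - f)^*(y)`. The weight `w = (M 1_{B(0,1)})^ε` is
bounded below by a positive constant on the bounded set `B(x,t)`, so averaging the `s`-th power
of this bound over `B(x,t)` against `w` and applying the embedding `X ↪ L^s_w` gives
`|f_k(x,t+ϵ_k) - f(x,t+ϵ_k)| ≲_{x,t} ‖(f_k - f)^*‖_X → 0`. Continuity of `f` at `(x,t)`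
finishes.
-/

open MeasureTheory Filter Metric
open scoped ENNReal NNReal

/-- The (centered) Hardy–Littlewood maximal operator on `ℝ≥0∞`-valued functions. -/
noncomputable def eMax (n : ℕ) (g : EuclideanSpace ℝ (Fin n) → ℝ≥0∞)
    (x : EuclideanSpace ℝ (Fin n)) : ℝ≥0∞ :=
  ⨆ (r : ℝ) (_ : 0 < r), (volume (Metric.ball x r))⁻¹ * ∫⁻ y in Metric.ball x r, g y

/-- The nontangential maximal function `g^*(y) = sup_{|z-y|<s} |g(z,s)|`. -/
noncomputable def ntMax (n : ℕ) (g : EuclideanSpace ℝ (Fin n) × ℝ → ℝ)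
    (y : EuclideanSpace ℝ (Fin n)) : ℝ≥0∞ :=
  ⨆ (p : EuclideanSpace ℝ (Fin n) × ℝ) (_ : 0 < p.2 ∧ dist p.1 y < p.2),
    ENNReal.ofReal |g p|

open Topology

section MaximalFunctions

variable {n : ℕ}

local notation "ℝⁿ" => EuclideanSpace ℝ (Fin n)

lemma inv_volume_ball_mul_setLIntegral_le_eMax (g : ℝⁿ → ℝ≥0∞) (y : ℝⁿ) {r : ℝ}
    (hr : 0 < r) :
    (volume (ball y r))⁻¹ * ∫⁻ z in ball y r, g z ≤ eMax n g y :=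
  le_iSup₂ (f := fun (ρ : ℝ) (_ : 0 < ρ) => (volume (ball y ρ))⁻¹ * ∫⁻ z in ball y ρ, g z)
    r hr

lemma volume_ball_div_le_eMax_indicator_ball (y : ℝⁿ) :
    volume (ball (0 : ℝⁿ) 1) / volume (ball (0 : ℝⁿ) (‖y‖ + 1))
      ≤ eMax n ((ball (0 : ℝⁿ) 1).indicator fun _ => (1 : ℝ≥0∞)) y := by
  have hsub : ball (0 : ℝⁿ) 1 ⊆ ball y (‖y‖ + 1) := by
    intro z hz
    rw [mem_ball_zero_iff] at hz
    rw [mem_ball, dist_eq_norm]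
    linarith [norm_sub_le z y]
  calc volume (ball (0 : ℝⁿ) 1) / volume (ball (0 : ℝⁿ) (‖y‖ + 1))
      = (volume (ball y (‖y‖ + 1)))⁻¹ * ∫⁻ z in ball y (‖y‖ + 1),
          (ball (0 : ℝⁿ) 1).indicator (fun _ => (1 : ℝ≥0∞)) z := by
        rw [lintegral_indicator_const measurableSet_ball, one_mul, Measure.restrict_apply
          measurableSet_ball, Set.inter_eq_self_of_subset_left hsub,
          Measure.addHaar_ball_center volume y, ENNReal.div_eq_inv_mul]
    _ ≤ _ := inv_volume_ball_mul_setLIntegral_le_eMax _ y (by positivity)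

lemma exists_pos_le_eMax_indicator_ball {S : Set ℝⁿ} (hS : Bornology.IsBounded S) :
    ∃ c : ℝ≥0∞, c ≠ 0 ∧ c ≠ ∞ ∧ ∀ y ∈ S,
      c ≤ eMax n ((ball (0 : ℝⁿ) 1).indicator fun _ => (1 : ℝ≥0∞)) y := by
  obtain ⟨R, hR, hSR⟩ := hS.exists_pos_norm_le
  refine ⟨volume (ball (0 : ℝⁿ) 1) / volume (ball (0 : ℝⁿ) (R + 1)),
    ENNReal.div_ne_zero.2 ⟨(measure_ball_pos _ _ one_pos).ne', measure_ball_lt_top.ne⟩,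
    ENNReal.div_ne_top measure_ball_lt_top.ne (measure_ball_pos _ _ (by linarith)).ne',
    fun y hy => le_trans ?_ (volume_ball_div_le_eMax_indicator_ball y)⟩
  exact ENNReal.div_le_div_left (measure_mono (ball_subset_ball (by linarith [hSR y hy]))) _

lemma ofReal_abs_le_ntMax (g : ℝⁿ × ℝ → ℝ) {x y : ℝⁿ} {τ : ℝ} (hτ : 0 < τ)
    (hxy : dist x y < τ) : ENNReal.ofReal |g (x, τ)| ≤ ntMax n g y :=
  le_iSup₂ (f := fun (p : ℝⁿ × ℝ) (_ : 0 < p.2 ∧ dist p.1 y < p.2) =>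
    ENNReal.ofReal |g p|) (x, τ) ⟨hτ, hxy⟩

end MaximalFunctions

lemma mul_rpow_le_lintegral_rpow_mul {α : Type*} [MeasurableSpace α] {μ : Measure α}
    {S : Set α} (hS : MeasurableSet S) {g w : α → ℝ≥0∞} {a c : ℝ≥0∞} {s : ℝ}
    (hs : 0 < s) (hg : ∀ y ∈ S, a ≤ g y) (hw : ∀ y ∈ S, c ≤ w y) :
    a * (c * μ S) ^ (1 / s) ≤ (∫⁻ y, g y ^ s * w y ∂μ) ^ (1 / s) := by
  have hs' : (0 : ℝ) ≤ 1 / s := by positivity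
  calc a * (c * μ S) ^ (1 / s) = (a ^ s * c * μ S) ^ (1 / s) := by
        rw [mul_assoc, ENNReal.mul_rpow_of_nonneg (a ^ s) _ hs', one_div,
          ENNReal.rpow_rpow_inv hs.ne']
    _ ≤ (∫⁻ y, g y ^ s * w y ∂μ) ^ (1 / s) := by
        gcongr
        calc a ^ s * c * μ S = ∫⁻ _ in S, a ^ s * c ∂μ := (setLIntegral_const S _).symm
          _ ≤ ∫⁻ y in S, g y ^ s * w y ∂μ := setLIntegral_mono' hS fun y hy =>
                mul_le_mul' (ENNReal.rpow_le_rpow (hg y hy) hs.le) (hw y hy)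
          _ ≤ ∫⁻ y, g y ^ s * w y ∂μ := setLIntegral_le_lintegral S _

lemma ENNReal.tendsto_nhds_zero_of_mul_le {ι : Type*} {l : Filter ι} {u v : ι → ℝ≥0∞}
    {K : ℝ≥0∞} (hK₀ : K ≠ 0) (hK : K ≠ ∞) (huv : ∀ i, u i * K ≤ v i)
    (hv : Tendsto v l (𝓝 0)) : Tendsto u l (𝓝 0) := by
  have hvK : Tendsto (fun i => v i * K⁻¹) l (𝓝 0) := by
    simpa using ENNReal.Tendsto.mul_const hv (Or.inr (ENNReal.inv_ne_top.2 hK₀))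
  refine tendsto_of_tendsto_of_tendsto_of_le_of_le tendsto_const_nhds hvK (fun _ => zero_le)
    fun i => ?_
  rw [← div_eq_mul_inv]
  exact (ENNReal.le_div_iff_mul_le (Or.inl hK₀) (Or.inl hK)).2 (huv i)

theorem stmt_16_general (n : ℕ) (N : (EuclideanSpace ℝ (Fin n) → ℝ≥0∞) → ℝ≥0∞)
    (s : ℝ) (hs : 0 < s) (ε : ℝ) (hε : ε ∈ Set.Ioo (0 : ℝ) 1)
    (C₀ : ℝ)
    (hemb : ∀ g : EuclideanSpace ℝ (Fin n) → ℝ≥0∞,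
      (∫⁻ x, g x ^ s
          * (eMax n ((Metric.ball (0 : EuclideanSpace ℝ (Fin n)) 1).indicator
              fun _ => (1 : ℝ≥0∞)) x) ^ ε) ^ (1 / s)
        ≤ ENNReal.ofReal C₀ * N g)
    (fk : ℕ → EuclideanSpace ℝ (Fin n) × ℝ → ℝ)
    (f : EuclideanSpace ℝ (Fin n) × ℝ → ℝ)
    (hf : ContinuousOn f {p : EuclideanSpace ℝ (Fin n) × ℝ | 0 < p.2})
    (hconv : Tendsto (fun k => N (ntMax n fun p => fk k p - f p)) atTop (nhds 0))
    (ϵ : ℕ → ℝ) (hϵpos : ∀ k, 0 < ϵ k) (hϵ : Tendsto ϵ atTop (nhds 0)) :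
    ∀ (x : EuclideanSpace ℝ (Fin n)) (t : ℝ), 0 < t →
      Tendsto (fun k => fk k (x, t + ϵ k)) atTop (nhds (f (x, t))) := by
  intro x t ht
  obtain ⟨c, hc₀, hc, hwc⟩ :=
    exists_pos_le_eMax_indicator_ball (isBounded_ball (x := x) (r := t))
  set K := (c ^ ε * volume (ball x t)) ^ (1 / s)
  have hK₀ : K ≠ 0 := by
    simp [K, hc₀, hc, hs.le, (measure_ball_pos volume x ht).ne', ENNReal.rpow_eq_zero_iff]
  have hK : K ≠ ∞ := by
    simp [K, hc₀, hc, hs.le, measure_ball_lt_top.ne, ENNReal.rpow_eq_top_iff,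
      ENNReal.mul_eq_top]
  have hkey : ∀ k, ENNReal.ofReal |fk k (x, t + ϵ k) - f (x, t + ϵ k)| * K
      ≤ ENNReal.ofReal C₀ * N (ntMax n fun p => fk k p - f p) := fun k =>
    (mul_rpow_le_lintegral_rpow_mul measurableSet_ball hs
      (fun y hy => ofReal_abs_le_ntMax (fun p => fk k p - f p) (add_pos ht (hϵpos k))
        ((dist_comm x y).trans_lt (mem_ball.1 hy) |>.trans (lt_add_of_pos_right t (hϵpos k))))
      (fun y hy => ENNReal.rpow_le_rpow (hwc y hy) hε.1.le)).trans (hemb _)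
  have hdiff : Tendsto (fun k => fk k (x, t + ϵ k) - f (x, t + ϵ k)) atTop (𝓝 0) := by
    refine tendsto_zero_iff_enorm_tendsto_zero.2 ?_
    simp only [Real.enorm_eq_ofReal_abs]
    exact ENNReal.tendsto_nhds_zero_of_mul_le hK₀ hK hkey
      (by simpa using ENNReal.Tendsto.const_mul hconv (Or.inr ENNReal.ofReal_ne_top))
  have hf_at : ContinuousAt f (x, t) :=
    hf.continuousAt ((isOpen_lt continuous_const continuous_snd).mem_nhds ht)
  have hpts : Tendsto (fun k => (x, t + ϵ k)) atTop (𝓝 (x, t)) :=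
    tendsto_const_nhds.prodMk_nhds (by simpa using tendsto_const_nhds.add hϵ)
  simpa using hdiff.add (hf_at.tendsto.comp hpts)

/-- **Pointwise convergence from nontangential-maximal convergence.** Let `N` be the
quasi-norm of a ball quasi-Banach function space `X` which embeds continuously into
`L^s_w(ℝⁿ)` for the weight `w = (M 1_{B(0,1)})^ε`, `ε ∈ (0,1)` (as follows from `X^{1/s}`
being a ball Banach function space with `M` bounded on its associate space). If
`f_k, f` are functions on `ℝ^{n+1}_+` with `‖(f_k - f)^*‖_X → 0`, `f` is continuous on
`ℝ^{n+1}_+`, and `ε_k → 0⁺`, then `f_k(x, t + ε_k) → f(x,t)` for every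
`(x,t) ∈ ℝ^{n+1}_+`. -/
theorem stmt_16 (n : ℕ) (N : (EuclideanSpace ℝ (Fin n) → ℝ≥0∞) → ℝ≥0∞)
    (hmono : ∀ f g, (∀ x, f x ≤ g x) → N f ≤ N g)
    (s : ℝ) (hs : 0 < s) (ε : ℝ) (hε : ε ∈ Set.Ioo (0 : ℝ) 1)
    (C₀ : ℝ) (hC₀ : 0 < C₀)
    (hemb : ∀ g : EuclideanSpace ℝ (Fin n) → ℝ≥0∞,
      (∫⁻ x, g x ^ s
          * (eMax n ((Metric.ball (0 : EuclideanSpace ℝ (Fin n)) 1).indicator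
              fun _ => (1 : ℝ≥0∞)) x) ^ ε) ^ (1 / s)
        ≤ ENNReal.ofReal C₀ * N g)
    (fk : ℕ → EuclideanSpace ℝ (Fin n) × ℝ → ℝ)
    (f : EuclideanSpace ℝ (Fin n) × ℝ → ℝ)
    (hf : ContinuousOn f {p : EuclideanSpace ℝ (Fin n) × ℝ | 0 < p.2})
    (hconv : Tendsto (fun k => N (ntMax n fun p => fk k p - f p)) atTop (nhds 0))
    (ϵ : ℕ → ℝ) (hϵpos : ∀ k, 0 < ϵ k) (hϵ : Tendsto ϵ atTop (nhds 0)) :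
    ∀ (x : EuclideanSpace ℝ (Fin n)) (t : ℝ), 0 < t →
      Tendsto (fun k => fk k (x, t + ϵ k)) atTop (nhds (f (x, t))) :=
  stmt_16_general n N s hs ε hε C₀ hemb fk f hf hconv ϵ hϵpos hϵ
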